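/- arXiv:0712.0811 — 3 statements merged into one kernel-verified Lean document; each statement's English description precedes it below -/
import Mathlib

section
/- Every positive integer n has exactly one representation of the form n = \sum_{i=1}^p a_i F_i where each a_i \in {0,1}, a_p = 1, F_1 = 1, F_2 = 2, F_{i+2} = F_{i+1} + F_i, and no two consecutive coefficients a_i, a_{i+1} are both 1 (Zeckendorf's theorem). -/
/-- Fibonacci numbers indexed so that `F 1 = 1`, `F 2 = 2`, `F (i+2) = F (i+1) + F i`
(and `F 0 = 1`). -/
def F (i : ℕ) : ℕ := Nat.fib (i + 1)

/-- `IsZeck n p a` : `a` (with values in {0,1}) is a Zeckendorf coefficient sequence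
of `n` with top index `p`: `a p = 1`, no two adjacent coefficients are both 1, and
`n = ∑_{i=1}^p a i * F i`. -/
def IsZeck (n p : ℕ) (a : ℕ → ℕ) : Prop :=
  0 < p ∧ (∀ i, a i ≤ 1) ∧ a p = 1 ∧ (∀ i, a i * a (i + 1) = 0) ∧
    n = ∑ i ∈ Finset.Icc 1 p, a i * F i

lemma F_pos (i : ℕ) : 0 < F i := Nat.fib_pos.mpr (Nat.succ_pos i)

lemma F_rec (i : ℕ) : F (i + 2) = F (i + 1) + F i := by
  simp [F, Nat.fib_add_two]; omega

lemma F_mono {i j : ℕ} (h : i ≤ j) : F i ≤ F j := Nat.fib_mono (by omega)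

lemma F_one : F 1 = 1 := rfl
lemma F_two : F 2 = 2 := rfl

lemma self_le_F (i : ℕ) : i ≤ F i := by
  induction i using Nat.strong_induction_on with
  | _ i ih =>
    match i with
    | 0 => simp
    | 1 => simp [F]
    | (k+2) =>
      have h1 := ih (k+1) (by omega)
      have h2 := F_pos k
      rw [F_rec]; omega

lemma sum_Icc_split (f : ℕ → ℕ) {q p : ℕ} (h : q ≤ p) :
    ∑ i ∈ Finset.Icc 1 p, f i
      = ∑ i ∈ Finset.Icc 1 q, f i + ∑ i ∈ Finset.Icc (q+1) p, f i := by
  have e : ∀ k : ℕ, Finset.Icc 1 k = Finset.Ioc 0 k := fun k => Finset.Icc_add_one_left_eq_Ioc 0 k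
  have e2 : Finset.Icc (q+1) p = Finset.Ioc q p := Finset.Icc_add_one_left_eq_Ioc q p
  rw [e, e, e2, Finset.sum_Ioc_consecutive f (Nat.zero_le q) h]

lemma zeck_sum_lt (p : ℕ) : ∀ a : ℕ → ℕ, (∀ i, a i ≤ 1) → (∀ i, a i * a (i + 1) = 0) →
    ∑ i ∈ Finset.Icc 1 p, a i * F i < F (p + 1) := by
  induction p using Nat.strong_induction_on with
  | _ p ih =>
    intro a ha hadj
    match p with
    | 0 => simp [F_pos]
    | 1 =>
      have h1 := ha 1
      simp only [Finset.Icc_self, Finset.sum_singleton, F_one, mul_one]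
      have h2 : F (1 + 1) = 2 := rfl
      omega
    | (k+2) =>
      rw [Finset.sum_Icc_succ_top (by omega)]
      have hr : F (k + 2 + 1) = F (k + 2) + F (k + 1) := F_rec (k + 1)
      have e1 : F (k + 1 + 1) = F (k + 2) := rfl
      rcases Nat.le_one_iff_eq_zero_or_eq_one.mp (ha (k+2)) with h | h
      · have h1 := ih (k+1) (by omega) a ha hadj
        rw [h]
        have h2 : F (k + 1 + 1) ≤ F (k + 2 + 1) := F_mono (by omega)
        omega
      · have hk1 : a (k+1) = 0 := by have := hadj (k+1); rw [h] at this; omega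
        rw [Finset.sum_Icc_succ_top (by omega), hk1, h]
        have h1 := ih k (by omega) a ha hadj
        omega

lemma zeck_lower {n p : ℕ} {a : ℕ → ℕ} (h : IsZeck n p a) : F p ≤ n := by
  obtain ⟨hp, ha, hap, hadj, hsum⟩ := h
  have h1 : a p * F p ≤ ∑ i ∈ Finset.Icc 1 p, a i * F i :=
    Finset.single_le_sum (f := fun i => a i * F i) (fun i _ => Nat.zero_le _)
      (Finset.mem_Icc.mpr ⟨hp, le_refl p⟩)
  rw [hap, one_mul] at h1; omega

lemma zeck_upper {n p : ℕ} {a : ℕ → ℕ} (h : IsZeck n p a) : n < F (p + 1) := by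
  obtain ⟨hp, ha, hap, hadj, hsum⟩ := h
  rw [hsum]; exact zeck_sum_lt p a ha hadj

lemma zeck_p_eq {n p p' : ℕ} {a a' : ℕ → ℕ} (h : IsZeck n p a) (h' : IsZeck n p' a') :
    p = p' := by
  have l1 := zeck_lower h; have u1 := zeck_upper h
  have l2 := zeck_lower h'; have u2 := zeck_upper h'
  by_contra hne
  rcases Nat.lt_or_ge p p' with hlt | hge
  · have : F (p + 1) ≤ F p' := F_mono (by omega); omega
  · have : F (p' + 1) ≤ F p := F_mono (by omega); omega

lemma exists_zeck : ∀ n : ℕ, 0 < n → ∃ p a, IsZeck n p a := by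
  intro n
  induction n using Nat.strong_induction_on with
  | _ n ih =>
    intro hn
    set p := Nat.findGreatest (fun p => F p ≤ n) n with hpdef
    have hp1 : F 1 ≤ n := by rw [F_one]; omega
    have hFp : F p ≤ n :=
      Nat.findGreatest_spec (P := fun p => F p ≤ n) (m := 1) (by omega) hp1
    have hple : 1 ≤ p := Nat.le_findGreatest (by omega) hp1
    have hub : n < F (p + 1) := by
      by_contra hc
      push_neg at hc
      have hle : p + 1 ≤ n := le_trans (self_le_F (p+1)) hc
      exact Nat.findGreatest_is_greatest (P := fun q => F q ≤ n) (k := p + 1)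
        (by omega) hle hc
    set m := n - F p with hmdef
    have hm : m + F p = n := Nat.sub_add_cancel hFp
    have hFrec : F (p + 1) = F p + F (p - 1) := by
      have h0 := F_rec (p - 1)
      have h1 : p - 1 + 2 = p + 1 := by omega
      have h2 : p - 1 + 1 = p := by omega
      rw [h1, h2] at h0; omega
    have hmlt : m < F (p - 1) := by omega
    rcases Nat.eq_zero_or_pos m with hm0 | hmpos
    · refine ⟨p, fun i => if i = p then 1 else 0, by omega, ?_, by simp, ?_, ?_⟩
      · intro i; dsimp only; split <;> omega
      · intro i; dsimp only
        by_cases h : i = p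
        · rw [if_pos h, if_neg (show ¬ i + 1 = p by omega), mul_zero]
        · rw [if_neg h, zero_mul]
      · rw [Finset.sum_eq_single_of_mem p (Finset.mem_Icc.mpr ⟨hple, le_refl p⟩)]
        · simp; omega
        · intro b _ hb; simp [hb]
    · have hFppos := F_pos p
      obtain ⟨q, b, hq0, hb, hbq, hbadj, hbsum⟩ := ih m (by omega) hmpos
      have hFq : F q ≤ m := zeck_lower ⟨hq0, hb, hbq, hbadj, hbsum⟩
      have hqlt : q < p - 1 := by
        by_contra hc
        push_neg at hc
        have : F (p - 1) ≤ F q := F_mono hc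
        omega
      refine ⟨p, fun i => if i = p then 1 else if i ≤ q then b i else 0,
        by omega, ?_, by simp, ?_, ?_⟩
      · intro i; dsimp only; split
        · omega
        · split
          · exact hb i
          · omega
      · intro i; dsimp only
        by_cases h1 : i = p
        · rw [if_neg (show ¬ i + 1 = p by omega), if_neg (show ¬ i + 1 ≤ q by omega),
            mul_zero]
        · by_cases h2 : i + 1 = p
          · rw [if_neg h1, if_neg (show ¬ i ≤ q by omega), zero_mul]
          · by_cases h3 : i + 1 ≤ q
            · rw [if_neg h1, if_pos (by omega), if_neg h2, if_pos h3]
              exact hbadj i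
            · rw [if_neg h2, if_neg h3, mul_zero]
      · rw [sum_Icc_split _ (show q ≤ p by omega)]
        have e1 : ∑ i ∈ Finset.Icc 1 q, (if i = p then 1 else if i ≤ q then b i else 0) * F i
            = ∑ i ∈ Finset.Icc 1 q, b i * F i := by
          apply Finset.sum_congr rfl
          intro i hi
          simp only [Finset.mem_Icc] at hi
          rw [if_neg (by omega), if_pos hi.2]
        have e2 : ∑ i ∈ Finset.Icc (q+1) p, (if i = p then 1 else if i ≤ q then b i else 0) * F i
            = F p := by
          rw [Finset.sum_eq_single_of_mem p (Finset.mem_Icc.mpr ⟨by omega, le_refl p⟩)]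
          · simp
          · intro j hj hne
            simp only [Finset.mem_Icc] at hj
            rw [if_neg hne, if_neg (by omega), zero_mul]
        rw [e1, e2, ← hbsum]; omega

lemma zeck_unique : ∀ n : ℕ, ∀ p a p' a', IsZeck n p a → IsZeck n p' a' →
    p = p' ∧ ∀ i ∈ Finset.Icc 1 p, a i = a' i := by
  intro n
  induction n using Nat.strong_induction_on with
  | _ n ih =>
    intro p a p' a' h h'
    have hpp : p = p' := zeck_p_eq h h'
    subst hpp
    refine ⟨rfl, ?_⟩
    obtain ⟨hp, ha, hap, hadj, hsum⟩ := h
    obtain ⟨_, ha', hap', hadj', hsum'⟩ := h'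
    have hps : p - 1 + 1 = p := by omega
    have hsum1 : n = ∑ i ∈ Finset.Icc 1 (p-1), a i * F i + F p := by
      rw [hsum, ← hps, Finset.sum_Icc_succ_top (by omega), hps, hap, one_mul]
    have hsum1' : n = ∑ i ∈ Finset.Icc 1 (p-1), a' i * F i + F p := by
      rw [hsum', ← hps, Finset.sum_Icc_succ_top (by omega), hps, hap', one_mul]
    set m := n - F p with hmdef
    have hFpos := F_pos p
    have hmeq : ∑ i ∈ Finset.Icc 1 (p-1), a i * F i = m := by omega
    have hmeq' : ∑ i ∈ Finset.Icc 1 (p-1), a' i * F i = m := by omega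
    rcases Nat.eq_zero_or_pos m with hm0 | hmpos
    · have hz : ∀ c : ℕ → ℕ, ∑ i ∈ Finset.Icc 1 (p-1), c i * F i = 0 →
          ∀ i ∈ Finset.Icc 1 (p-1), c i = 0 := by
        intro c hc i hi
        have h1 := Finset.sum_eq_zero_iff.mp hc i hi
        have h2 := F_pos i
        rcases Nat.mul_eq_zero.mp h1 with h3 | h3
        · exact h3
        · omega
      intro i hi
      simp only [Finset.mem_Icc] at hi
      rcases eq_or_ne i p with rfl | hne
      · rw [hap, hap']
      · have h1 := hz a (by omega) i (Finset.mem_Icc.mpr ⟨hi.1, by omega⟩)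
        have h2 := hz a' (by omega) i (Finset.mem_Icc.mpr ⟨hi.1, by omega⟩)
        omega
    · have key : ∀ c : ℕ → ℕ, (∀ i, c i ≤ 1) → (∀ i, c i * c (i + 1) = 0) →
          ∑ i ∈ Finset.Icc 1 (p-1), c i * F i = m →
          IsZeck m (Nat.findGreatest (fun i => 1 ≤ i ∧ c i = 1) (p - 1)) c ∧
            ∀ i, Nat.findGreatest (fun i => 1 ≤ i ∧ c i = 1) (p - 1) < i → i ≤ p - 1 →
              c i = 0 := by
        intro c hc hcadj hcm
        set q := Nat.findGreatest (fun i => 1 ≤ i ∧ c i = 1) (p - 1) with hqdef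
        have hwit : ∃ j ∈ Finset.Icc 1 (p-1), c j * F j ≠ 0 := by
          by_contra hcon
          push_neg at hcon
          have : ∑ i ∈ Finset.Icc 1 (p-1), c i * F i = 0 :=
            Finset.sum_eq_zero hcon
          omega
        obtain ⟨j, hj, hjne⟩ := hwit
        simp only [Finset.mem_Icc] at hj
        have hcj : c j = 1 := by
          have h1 : c j ≠ 0 := fun h0 => hjne (by rw [h0, zero_mul])
          have := hc j; omega
        have hqP : 1 ≤ q ∧ c q = 1 :=
          Nat.findGreatest_spec (P := fun i => 1 ≤ i ∧ c i = 1) (m := j) hj.2 ⟨hj.1, hcj⟩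
        have hqle : q ≤ p - 1 := Nat.findGreatest_le _
        have hzero : ∀ i, q < i → i ≤ p - 1 → c i = 0 := by
          intro i h1 h2
          have h3 := Nat.findGreatest_is_greatest (P := fun i => 1 ≤ i ∧ c i = 1)
            (k := i) h1 h2
          have := hc i
          rcases Nat.le_one_iff_eq_zero_or_eq_one.mp (hc i) with h4 | h4
          · exact h4
          · exact absurd ⟨by omega, h4⟩ h3
        refine ⟨⟨by omega, hc, hqP.2, hcadj, ?_⟩, hzero⟩
        rw [sum_Icc_split _ hqle] at hcm
        have hz2 : ∑ i ∈ Finset.Icc (q+1) (p-1), c i * F i = 0 := by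
          apply Finset.sum_eq_zero
          intro i hi
          simp only [Finset.mem_Icc] at hi
          rw [hzero i (by omega) hi.2, zero_mul]
        omega
      obtain ⟨hz1, hz2⟩ := key a ha hadj hmeq
      obtain ⟨hz1', hz2'⟩ := key a' ha' hadj' hmeq'
      have hFp := F_pos p
      obtain ⟨hqq, heq⟩ := ih m (by omega) _ a _ a' hz1 hz1'
      intro i hi
      simp only [Finset.mem_Icc] at hi
      rcases eq_or_ne i p with rfl | hne
      · rw [hap, hap']
      · rcases le_or_gt i (Nat.findGreatest (fun i => 1 ≤ i ∧ a i = 1) (p - 1))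
          with hle | hgt
        · exact heq i (Finset.mem_Icc.mpr ⟨hi.1, hle⟩)
        · rw [hz2 i hgt (by omega), hz2' i (hqq ▸ hgt) (by omega)]

/-- Zeckendorf's theorem: every positive integer has exactly one representation
`n = ∑_{i=1}^p a_i F_i` with `a_i ∈ {0,1}`, `a_p = 1` and no two consecutive
coefficients both equal to 1. -/
theorem zeckendorf (n : ℕ) (hn : 0 < n) :
    (∃ p a, IsZeck n p a) ∧
      ∀ p a p' a', IsZeck n p a → IsZeck n p' a' →
        p = p' ∧ ∀ i ∈ Finset.Icc 1 p, a i = a' i :=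
  ⟨exists_zeck n hn, fun p a p' a' h h' => zeck_unique n p a p' a' h h'⟩
end

section
/- The Fibonacci code is a prefix code: for distinct positive integers m and n, the codeword F(m) is not a prefix of the codeword F(n). -/
/-- The Fibonacci codeword determined by Zeckendorf coefficients `a_1 … a_p`:
the bit string `a_1 a_2 … a_p 1`. -/
def code (p : ℕ) (a : ℕ → ℕ) : List Bool :=
  ((List.range p).map fun i => decide (a (i + 1) = 1)) ++ [true]

/-! A codeword `a_1 … a_p 1` contains `11` only at its end, since `a_p = 1` and Zeckendorf digits
have no two adjacent ones. If `F(m)` were a proper prefix of `F(n)`, the digits `b_p b_{p+1}` of `n`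
would read `11`; and a prefix of the same length is the whole codeword, which determines the digits
and hence the number. -/

@[simp]
lemma code_length (p : ℕ) (a : ℕ → ℕ) : (code p a).length = p + 1 := by
  simp [code]

lemma code_getElem_of_lt {p i : ℕ} (a : ℕ → ℕ) (hi : i < p) :
    (code p a)[i]'(by simp; omega) = decide (a (i + 1) = 1) := by
  simp [code, List.getElem_append_left, hi]

lemma code_getElem_self (p : ℕ) (a : ℕ → ℕ) : (code p a)[p]'(by simp) = true := by
  simp [code]

section Prefix

variable {p q : ℕ} {a b : ℕ → ℕ}

lemma le_of_code_prefix (h : code p a <+: code q b) : p ≤ q := by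
  simpa using h.length_le

lemma code_prefix_bit_iff (h : code p a <+: code q b) {i : ℕ} (hi : i ∈ Finset.Icc 1 p) :
    a i = 1 ↔ b i = 1 := by
  obtain ⟨hi1, hip⟩ := Finset.mem_Icc.1 hi
  have hpq := le_of_code_prefix h
  have hbit := h.getElem (i := i - 1) (by simp; omega)
  rwa [code_getElem_of_lt a (by omega), code_getElem_of_lt b (by omega), Nat.sub_add_cancel hi1,
    decide_eq_decide] at hbit

lemma code_prefix_bit_succ (h : code p a <+: code q b) (hpq : p < q) : b (p + 1) = 1 := by
  have hbit := h.getElem (i := p) (by simp)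
  rw [code_getElem_self, code_getElem_of_lt b hpq] at hbit
  simpa using hbit.symm

end Prefix

lemma IsZeck.eq_of_bit_iff {m n p : ℕ} {a b : ℕ → ℕ} (ha : IsZeck m p a) (hb : IsZeck n p b)
    (hab : ∀ i ∈ Finset.Icc 1 p, a i = 1 ↔ b i = 1) : m = n := by
  obtain ⟨-, ha1, -, -, rfl⟩ := ha
  obtain ⟨-, hb1, -, -, rfl⟩ := hb
  refine Finset.sum_congr rfl fun i hi => ?_
  have hbit := hab i hi
  rw [show a i = b i by have := ha1 i; have := hb1 i; omega]

theorem fib_code_is_prefix_code_general (m n : ℕ) (hmn : m ≠ n)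
    (p q : ℕ) (a b : ℕ → ℕ) (ha : IsZeck m p a) (hb : IsZeck n q b) :
    ¬ (code p a <+: code q b) := by
  intro hpre
  rcases (le_of_code_prefix hpre).lt_or_eq with hpq | rfl
  · obtain ⟨hp, -, hap, -, -⟩ := ha
    obtain ⟨-, -, -, hbadj, -⟩ := hb
    have hbp : b p = 1 := (code_prefix_bit_iff hpre (Finset.mem_Icc.2 ⟨hp, le_rfl⟩)).1 hap
    have h11 := hbadj p
    rw [hbp, code_prefix_bit_succ hpre hpq] at h11
    exact one_ne_zero h11
  · exact hmn (ha.eq_of_bit_iff hb fun i hi => code_prefix_bit_iff hpre hi)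

/-- The Fibonacci code is a prefix code: for distinct positive integers `m` and `n`,
the codeword of `m` is not a prefix of the codeword of `n`. -/
theorem fib_code_is_prefix_code (m n : ℕ) (hm : 0 < m) (hn : 0 < n) (hmn : m ≠ n)
    (p q : ℕ) (a b : ℕ → ℕ) (ha : IsZeck m p a) (hb : IsZeck n q b) :
    ¬ (code p a <+: code q b) :=
  fib_code_is_prefix_code_general m n hmn p q a b ha hb
end

section
/- For the Fibonacci right shift, V(F(n) <<_F k) = F_k * V(F(n)) + F_{k-1} * V(F(n) >>_F 1), where F_0 = 1 and F_i = 0 for i < 0. -/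
/-- Fibonacci numbers extended to integer indices: `Fz 0 = 1`, `Fz 1 = 1`, `Fz 2 = 2`,
and `Fz i = 0` for `i < 0`. -/
def Fz (i : ℤ) : ℤ := if 0 ≤ i then (Nat.fib (i.toNat + 1) : ℤ) else 0

lemma Fz_key (i k : ℕ) (hi : 1 ≤ i) :
    Fz ((i : ℤ) + k) = Fz k * Fz i + Fz ((k : ℤ) - 1) * Fz ((i : ℤ) - 1) := by
  rcases Nat.eq_zero_or_pos k with hk | hk
  · subst hk
    simp [Fz]
  · have t1 : ((i : ℤ) + k).toNat = i + k := by omega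
    have t2 : ((k : ℤ) - 1).toNat = k - 1 := by omega
    have t3 : ((i : ℤ) - 1).toNat = i - 1 := by omega
    have h1 : Fz ((i : ℤ) + k) = (Nat.fib (i + k + 1) : ℤ) := by
      rw [Fz, if_pos (by omega), t1]
    have h2 : Fz k = (Nat.fib (k + 1) : ℤ) := by simp [Fz]
    have h3 : Fz i = (Nat.fib (i + 1) : ℤ) := by simp [Fz]
    have h4 : Fz ((k : ℤ) - 1) = (Nat.fib k : ℤ) := by
      rw [Fz, if_pos (by omega), t2]
      rw [show k - 1 + 1 = k from by omega]
    have h5 : Fz ((i : ℤ) - 1) = (Nat.fib i : ℤ) := by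
      rw [Fz, if_pos (by omega), t3]
      rw [show i - 1 + 1 = i from by omega]
    rw [h1, h2, h3, h4, h5]
    have key : Nat.fib (i + k + 1) = Nat.fib i * Nat.fib k + Nat.fib (i + 1) * Nat.fib (k + 1) := by
      have := Nat.fib_add i k
      convert this using 2 <;> omega
    rw [key]
    push_cast
    ring

/-- Fibonacci shift theorem: `V(F(n) <<_F k) = F_k * V(F(n)) + F_{k-1} * V(F(n) >>_F 1)`,
where the shifted values are `∑ a_i F_{i+k}`, `∑ a_i F_i` and `∑ a_i F_{i-1}`. -/
theorem fib_shift (n p : ℕ) (a : ℕ → ℕ) (ha : IsZeck n p a) (k : ℕ) :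
    (∑ i ∈ Finset.Icc 1 p, (a i : ℤ) * Fz (i + k)) =
      Fz k * (∑ i ∈ Finset.Icc 1 p, (a i : ℤ) * Fz i) +
        Fz ((k : ℤ) - 1) * (∑ i ∈ Finset.Icc 1 p, (a i : ℤ) * Fz ((i : ℤ) - 1)) := by
  rw [Finset.mul_sum, Finset.mul_sum, ← Finset.sum_add_distrib]
  apply Finset.sum_congr rfl
  intro i hi
  rw [Finset.mem_Icc] at hi
  rw [Fz_key i k hi.1]
  ring
end
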